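/- arXiv:1902.07183 — 2 statements merged into one kernel-verified Lean document; each statement's English description precedes it below -/
import Mathlib

section
/- Let N be a lattice of rank r ≥ 1 with dual M := Hom_ℤ(N,ℤ), let n ∈ N be primitive, and set M_n := {m ∈ M : m(n) = 0}. Let Θ_0 be a generator of Λ^r M and Θ_n a generator of Λ^{r−1} M_n, with squares Θ_0^□ ∈ Λ^{2r}(M⊕M) and Θ_n^□ ∈ Λ^{2r−2}(M_n⊕M_n) (these squares do not depend on the choice of generator). Then Θ_n^□ = ι_{(0,n)}(ι_{(n,0)}(Θ_0^□)), where (n,0), (0,n) ∈ N⊕N = Hom(M⊕M,ℤ) act by contraction on Λ^*(M⊕M). -/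
/-!
Since `n` is primitive, some `φ ∈ M` has `φ n = 1`, so `n` extends to a basis
`e₀ = n, e₁, …, e_{r-1}` of `N`; let `m` be the dual basis. Then `Θ₀ = ±m₀ ∧ ⋯ ∧ m_{r-1}` and
`Θ_n = ±m₁ ∧ ⋯ ∧ m_{r-1}`, and the signs disappear in the squares. Up to sign, `Θ₀^□` is
`(m₀,0) ∧ ⋯ ∧ (m_{r-1},0) ∧ (0,m₀) ∧ ⋯ ∧ (0,m_{r-1})`, and the only factors on which `(n,0)`
and `(0,n)` do not vanish are `(m₀,0)` and `(0,m₀)`: the two contractions delete them, and the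
sign `(-1)^{r-1}` picked up while passing the first block turns the sign of `Θ₀^□` into that
of `Θ_n^□`.
-/

set_option synthInstance.maxHeartbeats 1000000
set_option maxHeartbeats 1000000

open Module

/-- `n ∈ N` is primitive: it is not a positive multiple of any other lattice element. -/
def IsPrimitiveElt {N : Type} [AddCommGroup N] (n : N) : Prop :=
  ∀ (k : ℤ), 0 < k → ∀ m : N, n = k • m → k = 1

/-- The image of the `d`-th exterior power `Λ^d W` of a submodule `W ⊆ V` inside the
exterior algebra of `V`. -/
noncomputable def extSubPow {V : Type} [AddCommGroup V] (W : Submodule ℤ V) (d : ℕ) :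
    Submodule ℤ (ExteriorAlgebra ℤ V) :=
  (Submodule.map (ExteriorAlgebra.ι ℤ) W) ^ d

/-- The squaring operation `α ↦ α^□` on degree-`k` elements, from `Λ^* V` to `Λ^*(V ⊕ V)`. -/
noncomputable def extSq {V : Type} [AddCommGroup V] (k : ℕ) (x : ExteriorAlgebra ℤ V) :
    ExteriorAlgebra ℤ (V × V) :=
  ((-1 : ℤ) ^ (k * (k - 1) / 2)) •
    (ExteriorAlgebra.map (LinearMap.inl ℤ V V) x * ExteriorAlgebra.map (LinearMap.inr ℤ V V) x)

open ExteriorAlgebra CliffordAlgebra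

section Lattice

theorem Module.Basis.exists_eq_smul_of_forall_dvd_repr {R M ι : Type*} [CommRing R]
    [AddCommGroup M] [Module R M] [Fintype ι] (b : Basis ι R M) {g : R} {x : M}
    (h : ∀ i, g ∣ b.repr x i) : ∃ y : M, x = g • y := by
  choose c hc using h
  refine ⟨∑ i, c i • b i, ?_⟩
  rw [Finset.smul_sum]
  conv_lhs => rw [← b.sum_repr x]
  exact Finset.sum_congr rfl fun i _ => by rw [hc i, smul_smul]

/-- The values `ψ n`, `ψ ∈ Dual ℤ N`, form an ideal `g ℤ`; all coordinates of `n` lie in it,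
so `n ∈ g • N` and primitivity forces `g = ±1`. -/
theorem IsPrimitiveElt.exists_dual_eq_one {N : Type} [AddCommGroup N] [Module.Free ℤ N]
    [Module.Finite ℤ N] {n : N} (hn : IsPrimitiveElt n) : ∃ φ : Dual ℤ N, φ n = 1 := by
  set S : Ideal ℤ := LinearMap.range (Dual.eval ℤ N n)
  obtain ⟨g, hg⟩ := Submodule.IsPrincipal.principal S
  suffices IsUnit g by
    obtain ⟨φ, hφ⟩ : (1 : ℤ) ∈ S := by
      rw [Ideal.eq_top_of_isUnit_mem S (hg ▸ Submodule.mem_span_singleton_self g) this]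
      exact Submodule.mem_top
    exact ⟨φ, hφ⟩
  have hdvd (ψ : Dual ℤ N) : g ∣ ψ n := by
    have : ψ n ∈ S := LinearMap.mem_range_self (Dual.eval ℤ N n) ψ
    rwa [hg, Ideal.submodule_span_eq, Ideal.mem_span_singleton] at this
  obtain ⟨m, hm⟩ := (Module.finBasis ℤ N).exists_eq_smul_of_forall_dvd_repr fun i =>
    hdvd ((Module.finBasis ℤ N).coord i)
  rcases lt_trichotomy g 0 with hneg | rfl | hpos
  · have := hn (-g) (by omega) (-m) (by rw [neg_smul_neg, hm])
    exact Int.isUnit_iff.mpr (by omega)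
  · have := hn 2 two_pos 0 (by rw [hm, zero_smul, smul_zero])
    omega
  · exact Int.isUnit_iff.mpr (Or.inl (hn g hpos m hm))

theorem exists_basis_fin_succ_zero_eq_of_dual_eq_one {R N : Type*} [CommRing R] [IsDomain R]
    [IsPrincipalIdealRing R] [AddCommGroup N] [Module R N] [Module.Free R N] [Module.Finite R N]
    {n : N} {φ : Dual R N} (hφ : φ n = 1) :
    ∃ (d : ℕ) (e : Basis (Fin (d + 1)) R N), e 0 = n := by
  refine ⟨_, Basis.mkFinCons n (Module.finBasis R (LinearMap.ker φ)) (fun c x hx hc => ?_)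
    (fun z => ⟨-φ z, ?_⟩), by simp⟩
  · simpa [LinearMap.mem_ker.mp hx, hφ] using congrArg φ hc
  · simp [hφ]

theorem Module.Basis.ker_eval_zero_eq_span_dualBasis_succ {R N : Type*} [CommRing R]
    [AddCommGroup N] [Module R N] {d : ℕ} (e : Basis (Fin (d + 1)) R N) :
    LinearMap.ker (Dual.eval R N (e 0)) = Submodule.span R (Set.range (Fin.tail e.dualBasis)) := by
  refine le_antisymm (fun ψ hψ => ?_) (Submodule.span_le.mpr ?_)
  · rw [← e.sum_dual_apply_smul_coord ψ, Fin.sum_univ_succ, show ψ (e 0) = 0 from hψ, zero_smul,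
      zero_add]
    exact Submodule.sum_mem _ fun i _ => Submodule.smul_mem _ _
      (Submodule.subset_span ⟨i, by simp [Fin.tail, e.coe_dualBasis]⟩)
  · rintro _ ⟨i, rfl⟩
    simp [Fin.tail, Fin.succ_ne_zero]

end Lattice

section Contraction

variable {R V : Type*} [CommRing R] [AddCommGroup V] [Module R V]

theorem contractLeft_ιMulti_mul_of_forall_eq_zero {d : ℕ} (f : Dual R V) {w : Fin d → V}
    (hw : ∀ i, f (w i) = 0) (y : ExteriorAlgebra R V) :
    contractLeft f (ιMulti R d w * y) = (-1 : R) ^ d • (ιMulti R d w * contractLeft f y) := by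
  induction d with
  | zero => simp
  | succ d ih =>
    rw [ιMulti_succ_apply, mul_assoc, contractLeft_ι_mul, hw 0, zero_smul, zero_sub,
      ih (w := Matrix.vecTail w) fun i => hw i.succ, pow_succ', mul_smul, neg_one_smul,
      mul_smul_comm, mul_assoc]

theorem contractLeft_ιMulti_of_forall_eq_zero {d : ℕ} (f : Dual R V) {w : Fin d → V}
    (hw : ∀ i, f (w i) = 0) : contractLeft f (ιMulti R d w) = 0 := by
  simpa using contractLeft_ιMulti_mul_of_forall_eq_zero f hw 1

theorem contractLeft_ιMulti_succ_mul {d : ℕ} (f : Dual R V) {w : Fin (d + 1) → V}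
    (h0 : f (w 0) = 1) (hw : ∀ i : Fin d, f (w i.succ) = 0) {y : ExteriorAlgebra R V}
    (hy : contractLeft f y = 0) :
    contractLeft f (ιMulti R (d + 1) w * y) = ιMulti R d (Fin.tail w) * y := by
  rw [ιMulti_succ_apply, mul_assoc, contractLeft_ι_mul, h0, one_smul,
    contractLeft_ιMulti_mul_of_forall_eq_zero f (w := Matrix.vecTail w) hw, hy, mul_zero,
    smul_zero, mul_zero, sub_zero]
  rfl

theorem contractLeft_ιMulti_succ {d : ℕ} (f : Dual R V) {w : Fin (d + 1) → V}
    (h0 : f (w 0) = 1) (hw : ∀ i : Fin d, f (w i.succ) = 0) :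
    contractLeft f (ιMulti R (d + 1) w) = ιMulti R d (Fin.tail w) := by
  simpa using contractLeft_ιMulti_succ_mul f h0 hw (contractLeft_one (Q := 0) f)

theorem eq_zero_of_smul_ιMulti_eq_zero {d : ℕ} {v : Fin d → V} (f : Fin d → Dual R V)
    (hf : ∀ i k, f i (v k) = if i = k then 1 else 0) {a : R} (h : a • ιMulti R d v = 0) :
    a = 0 := by
  induction d with
  | zero =>
    rwa [ιMulti_zero_apply, ← Algebra.algebraMap_eq_smul_one, algebraMap_eq_zero_iff] at h
  | succ d ih =>
    refine ih (fun i => f i.succ) (fun i k => by simpa using hf i.succ k.succ) ?_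
    have hcontract := congrArg (contractLeft (f 0)) h
    rwa [map_smul, map_zero, contractLeft_ιMulti_succ _ (by simpa using hf 0 0)
      (fun i => by simpa [eq_comm] using hf 0 i.succ)] at hcontract

theorem Module.Basis.eq_zero_of_smul_ιMulti_comp_eq_zero {ι : Type*} (b : Basis ι R V) {d : ℕ}
    {s : Fin d → ι} (hs : Function.Injective s) {a : R} (h : a • ιMulti R d (b ∘ s) = 0) :
    a = 0 :=
  eq_zero_of_smul_ιMulti_eq_zero (fun i => b.coord (s i))
    (fun i k => by classical simp [Finsupp.single_apply, hs.eq_iff, eq_comm]) h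

end Contraction

section Span

variable {R V : Type*} [CommRing R] [AddCommGroup V] [Module R V]

theorem ιMulti_comp_mem_span_singleton {d : ℕ} (v : Fin d → V) (s : Fin d → Fin d) :
    ιMulti R d (v ∘ s) ∈ R ∙ ιMulti R d v := by
  by_cases hs : Function.Injective s
  · have hσ : v ∘ s = v ∘ Equiv.ofBijective s hs.bijective_of_finite := rfl
    rw [hσ, AlternatingMap.map_perm]
    exact Submodule.smul_of_tower_mem _ _ (Submodule.mem_span_singleton_self _)
  · rw [ιMulti_eq_zero_of_not_inj fun h => hs h.of_comp]
    exact Submodule.zero_mem _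

theorem ιMulti_mem_span_singleton {d : ℕ} {v w : Fin d → V}
    (hw : ∀ i, w i ∈ Submodule.span R (Set.range v)) : ιMulti R d w ∈ R ∙ ιMulti R d v := by
  choose c hc using fun i => (Submodule.mem_span_range_iff_exists_fun R).mp (hw i)
  have hw' : w = fun i => ∑ j, c i j • v j := funext fun i => (hc i).symm
  rw [hw', ← AlternatingMap.coe_multilinearMap, MultilinearMap.map_sum]
  refine Submodule.sum_mem _ fun s _ => ?_
  rw [show (fun i => c i (s i) • v (s i)) = fun i => c i (s i) • (v ∘ s) i from rfl,
    MultilinearMap.map_smul_univ]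
  exact Submodule.smul_mem _ _ (ιMulti_comp_mem_span_singleton v s)

end Span

section Square

variable {V : Type} [AddCommGroup V]

theorem extSubPow_span_eq {d : ℕ} (v : Fin d → V) :
    extSubPow (Submodule.span ℤ (Set.range v)) d = ℤ ∙ ιMulti ℤ d v := by
  refine le_antisymm ?_ ?_
  · rw [extSubPow, Submodule.pow_eq_span_pow_set, Submodule.span_le]
    intro x hx
    obtain ⟨f, rfl⟩ := Set.mem_pow.mp hx
    choose w hw hιw using fun i => (f i).2
    rw [show (List.ofFn fun i => (f i : ExteriorAlgebra ℤ V)).prod = ιMulti ℤ d w by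
      simp only [ιMulti_apply, hιw]]
    exact ιMulti_mem_span_singleton hw
  · rw [Submodule.span_singleton_le_iff_mem, extSubPow, ιMulti_apply]
    refine Submodule.pow_subset_pow _ (Set.mem_pow.mpr ⟨fun i => ⟨ι ℤ (v i), ?_⟩, rfl⟩)
    exact Submodule.mem_map_of_mem (Submodule.subset_span ⟨i, rfl⟩)

theorem eq_or_eq_neg_of_span_singleton_eq {M : Type*} [AddCommGroup M] {x y : M}
    (hy : ∀ a : ℤ, a • y = 0 → a = 0) (h : ℤ ∙ x = ℤ ∙ y) : x = y ∨ x = -y := by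
  obtain ⟨a, ha⟩ := Submodule.mem_span_singleton.mp (h ▸ Submodule.mem_span_singleton_self x)
  obtain ⟨b, hb⟩ := Submodule.mem_span_singleton.mp (h ▸ Submodule.mem_span_singleton_self y)
  have hab : b * a - 1 = 0 := hy _ (by rw [sub_smul, mul_smul, ha, hb, one_smul, sub_self])
  rcases Int.eq_one_or_neg_one_of_mul_eq_one' (sub_eq_zero.mp hab) with ⟨-, rfl⟩ | ⟨-, rfl⟩
  · exact Or.inl (by rw [← ha, one_smul])
  · exact Or.inr (by rw [← ha, neg_one_smul])

theorem extSq_neg (k : ℕ) (x : ExteriorAlgebra ℤ V) : extSq k (-x) = extSq k x := by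
  rw [extSq, extSq, map_neg, map_neg, neg_mul_neg]

theorem extSq_eq_of_span_singleton_eq (k : ℕ) {x y : ExteriorAlgebra ℤ V}
    (hy : ∀ a : ℤ, a • y = 0 → a = 0) (h : ℤ ∙ x = ℤ ∙ y) : extSq k x = extSq k y := by
  rcases eq_or_eq_neg_of_span_singleton_eq hy h with rfl | rfl
  exacts [rfl, extSq_neg k y]

theorem neg_one_pow_triangle_succ_mul (d : ℕ) :
    (-1 : ℤ) ^ ((d + 1) * (d + 1 - 1) / 2) * (-1) ^ d = (-1) ^ (d * (d - 1) / 2) := by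
  rw [Nat.triangle_succ, pow_add, mul_assoc, ← pow_add, Even.neg_one_pow ⟨d, rfl⟩, mul_one]

theorem contractLeft_contractLeft_extSq_ιMulti {d : ℕ} (f : Dual ℤ V) {w : Fin (d + 1) → V}
    (h0 : f (w 0) = 1) (hw : ∀ i : Fin d, f (w i.succ) = 0) :
    contractLeft (f ∘ₗ LinearMap.snd ℤ V V)
        (contractLeft (f ∘ₗ LinearMap.fst ℤ V V) (extSq (d + 1) (ιMulti ℤ (d + 1) w))) =
      extSq d (ιMulti ℤ d (Fin.tail w)) := by
  have hfst : contractLeft (f ∘ₗ LinearMap.fst ℤ V V)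
      (ιMulti ℤ (d + 1) (LinearMap.inl ℤ V V ∘ w) * ιMulti ℤ (d + 1) (LinearMap.inr ℤ V V ∘ w)) =
      ιMulti ℤ d (LinearMap.inl ℤ V V ∘ Fin.tail w) *
        ιMulti ℤ (d + 1) (LinearMap.inr ℤ V V ∘ w) :=
    contractLeft_ιMulti_succ_mul _ (by simpa using h0) (by simpa using hw)
      (contractLeft_ιMulti_of_forall_eq_zero _ (by simp))
  have hsnd : contractLeft (f ∘ₗ LinearMap.snd ℤ V V)
      (ιMulti ℤ d (LinearMap.inl ℤ V V ∘ Fin.tail w) *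
        ιMulti ℤ (d + 1) (LinearMap.inr ℤ V V ∘ w)) =
      (-1 : ℤ) ^ d • (ιMulti ℤ d (LinearMap.inl ℤ V V ∘ Fin.tail w) *
        ιMulti ℤ d (LinearMap.inr ℤ V V ∘ Fin.tail w)) := by
    rw [contractLeft_ιMulti_mul_of_forall_eq_zero _ (by simp),
      contractLeft_ιMulti_succ _ (by simpa using h0) (by simpa using hw)]
    rfl
  simp only [extSq, map_apply_ιMulti, map_smul, hfst, hsnd, smul_smul,
    neg_one_pow_triangle_succ_mul]

end Square

theorem sq_top_contract_general (N : Type) [AddCommGroup N] [Module.Free ℤ N] [Module.Finite ℤ N]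
    (r : ℕ) (hr : r = finrank ℤ N)
    (n : N) (hn : IsPrimitiveElt n)
    (Θ₀ : ExteriorAlgebra ℤ (Module.Dual ℤ N))
    (hΘ₀ : Submodule.span ℤ {Θ₀} = extSubPow (⊤ : Submodule ℤ (Module.Dual ℤ N)) r)
    (Θn : ExteriorAlgebra ℤ (Module.Dual ℤ N))
    (hΘn : Submodule.span ℤ {Θn} = extSubPow (LinearMap.ker (Module.Dual.eval ℤ N n)) (r - 1)) :
    extSq (r - 1) Θn =
      CliffordAlgebra.contractLeft
        ((Module.Dual.eval ℤ N n).comp (LinearMap.snd ℤ (Module.Dual ℤ N) (Module.Dual ℤ N)) :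
          Module.Dual ℤ (Module.Dual ℤ N × Module.Dual ℤ N))
        (CliffordAlgebra.contractLeft
          ((Module.Dual.eval ℤ N n).comp (LinearMap.fst ℤ (Module.Dual ℤ N) (Module.Dual ℤ N)) :
            Module.Dual ℤ (Module.Dual ℤ N × Module.Dual ℤ N))
          (extSq r Θ₀)) := by
  obtain ⟨φ, hφ⟩ := hn.exists_dual_eq_one
  obtain ⟨d, e, rfl⟩ := exists_basis_fin_succ_zero_eq_of_dual_eq_one hφ
  obtain rfl : r = d + 1 := by rw [hr, finrank_eq_card_basis e, Fintype.card_fin]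
  rw [Nat.add_sub_cancel] at hΘn ⊢
  set m := e.dualBasis
  have hΘ₀m : extSq (d + 1) Θ₀ = extSq (d + 1) (ιMulti ℤ (d + 1) (m ∘ id)) :=
    extSq_eq_of_span_singleton_eq _ (fun _ => m.eq_zero_of_smul_ιMulti_comp_eq_zero
      Function.injective_id) (by rw [hΘ₀, ← m.span_eq, ← extSubPow_span_eq]; rfl)
  have hΘnm : extSq d Θn = extSq d (ιMulti ℤ d (m ∘ Fin.succ)) :=
    extSq_eq_of_span_singleton_eq _ (fun _ => m.eq_zero_of_smul_ιMulti_comp_eq_zero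
      (Fin.succ_injective _))
      (by rw [hΘn, e.ker_eval_zero_eq_span_dualBasis_succ, ← extSubPow_span_eq]; rfl)
  rw [hΘ₀m, hΘnm]
  exact (contractLeft_contractLeft_extSq_ιMulti _ (by simp [m])
    fun i => by simp [m, Fin.succ_ne_zero]).symm

/-- **`Θ_n^□ = ι_{(n,0)∧(0,n)}(Θ_0^□)`** (used in the construction of the multiplicity TrQFT).
Let `N` be a lattice of rank `r ≥ 1` with dual `M`, `n ∈ N` primitive, `M_n := n^⊥`.
If `Θ_0` generates `Λ^r M` and `Θ_n` generates `Λ^{r−1} M_n`, then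
`Θ_n^□ = ι_{(0,n)}(ι_{(n,0)}(Θ_0^□))` in `Λ^*(M ⊕ M)`. -/
theorem sq_top_contract (N : Type) [AddCommGroup N] [Module.Free ℤ N] [Module.Finite ℤ N]
    (r : ℕ) (hr : r = finrank ℤ N) (hr1 : 1 ≤ r)
    (n : N) (hn : IsPrimitiveElt n)
    (Θ₀ : ExteriorAlgebra ℤ (Module.Dual ℤ N))
    (hΘ₀ : Submodule.span ℤ {Θ₀} = extSubPow (⊤ : Submodule ℤ (Module.Dual ℤ N)) r)
    (Θn : ExteriorAlgebra ℤ (Module.Dual ℤ N))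
    (hΘn : Submodule.span ℤ {Θn} = extSubPow (LinearMap.ker (Module.Dual.eval ℤ N n)) (r - 1)) :
    extSq (r - 1) Θn =
      CliffordAlgebra.contractLeft
        ((Module.Dual.eval ℤ N n).comp (LinearMap.snd ℤ (Module.Dual ℤ N) (Module.Dual ℤ N)) :
          Module.Dual ℤ (Module.Dual ℤ N × Module.Dual ℤ N))
        (CliffordAlgebra.contractLeft
          ((Module.Dual.eval ℤ N n).comp (LinearMap.fst ℤ (Module.Dual ℤ N) (Module.Dual ℤ N)) :
            Module.Dual ℤ (Module.Dual ℤ N × Module.Dual ℤ N))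
          (extSq r Θ₀)) :=
  sq_top_contract_general N r hr n hn Θ₀ hΘ₀ Θn hΘn
end

section
/- Let N be a lattice with dual M, A := ℤ[N]⊗_ℤΛ^* M, l_1(z^n⊗α) := z^n⊗ι_n(α), and let [·,·] be the Schouten–Nijenhuis bracket. Then the failure of l_1 to be a derivation is measured by the Schouten–Nijenhuis bracket: for all homogeneous a, b ∈ A, l_1(a·b) = l_1(a)·b + (−1)^{deg a}·a·l_1(b) + (−1)^{deg a − 1}·[a, b]. Equivalently, the bracket canonically associated to the BV-operator l_1, namely (a,b) ↦ (−1)^{deg a}·l_1(ab) − (−1)^{deg a}·l_1(a)·b − a·l_1(b), equals −[a, b]. -/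
set_option synthInstance.maxHeartbeats 1000000
set_option maxHeartbeats 1000000

open Module

/-- Contraction `ι_n` on `Λ^* M`, `M := Hom(N, ℤ)`, by a lattice element `n ∈ N`. -/
noncomputable def ctr {N : Type} [AddCommGroup N] (n : N) :
    ExteriorAlgebra ℤ (Module.Dual ℤ N) →ₗ[ℤ] ExteriorAlgebra ℤ (Module.Dual ℤ N) :=
  CliffordAlgebra.contractLeft (Module.Dual.eval ℤ N n)

/-- The operator `l_1` on `A = ℤ[N] ⊗ Λ^* M`: `l_1(z^n ⊗ α) = z^n ⊗ ι_n(α)`. -/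
noncomputable def lOne {N : Type} [AddCommGroup N]
    (x : AddMonoidAlgebra (ExteriorAlgebra ℤ (Module.Dual ℤ N)) N) :
    AddMonoidAlgebra (ExteriorAlgebra ℤ (Module.Dual ℤ N)) N :=
  Finsupp.sum x.coeff fun n a => AddMonoidAlgebra.single n (ctr n a)

/-- The Schouten–Nijenhuis bracket of homogeneous elements `z^{na}⊗αa`, `z^{nb}⊗αb`
(with `αa ∈ Λ^{da} M`):
`[z^{na}⊗αa, z^{nb}⊗αb] = (−1)^{da−1} z^{na+nb}⊗(ι_{nb}(αa)∧αb + (−1)^{da} αa∧ι_{na}(αb))`. -/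
noncomputable def snBracket {N : Type} [AddCommGroup N]
    (na nb : N) (da : ℕ) (αa αb : ExteriorAlgebra ℤ (Module.Dual ℤ N)) :
    AddMonoidAlgebra (ExteriorAlgebra ℤ (Module.Dual ℤ N)) N :=
  ((-1 : ℤ) ^ (da + 1)) • AddMonoidAlgebra.single (na + nb)
    (ctr nb αa * αb + ((-1 : ℤ) ^ da) • (αa * ctr na αb))

/-!
Both `l_1` and the bracket only involve contractions, and `ι_n` is a graded derivation of
`Λ^* M` of degree `-1`, additive in `n`. Hence
`l_1(ab) = z^{na+nb} ⊗ (ι_{na} + ι_{nb})(αa ∧ αb)`; expanding both contractions by the Leibniz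
rule, the terms `ι_{na}αa ∧ αb` and `(−1)^{da} αa ∧ ι_{nb}αb` give `l_1(a)b + (−1)^{da} a l_1(b)`,
and the two cross terms `ι_{nb}αa ∧ αb + (−1)^{da} αa ∧ ι_{na}αb` are the bracket up to its sign.
-/

namespace ExteriorAlgebra

variable {R M : Type*} [CommRing R] [AddCommGroup M] [Module R M]

theorem contractLeft_ι_mul (d : Module.Dual R M) (v : M) (β : ExteriorAlgebra R M) :
    CliffordAlgebra.contractLeft d (ι R v * β) =
      d v • β - ι R v * CliffordAlgebra.contractLeft d β :=
  CliffordAlgebra.contractLeft_ι_mul d v β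

theorem contractLeft_mul_of_mem_exteriorPower (d : Module.Dual R M) {k : ℕ}
    {α : ExteriorAlgebra R M} (hα : α ∈ ⋀[R]^k M) (β : ExteriorAlgebra R M) :
    CliffordAlgebra.contractLeft d (α * β) =
      CliffordAlgebra.contractLeft d α * β +
        ((-1 : ℤ) ^ k) • (α * CliffordAlgebra.contractLeft d β) := by
  induction hα using Submodule.pow_induction_on_left' with
  | algebraMap r =>
    rw [CliffordAlgebra.contractLeft_algebraMap_mul, CliffordAlgebra.contractLeft_algebraMap,
      zero_mul, zero_add, pow_zero, one_smul]
  | add x y i _ _ ihx ihy =>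
    rw [add_mul, map_add, map_add, ihx, ihy, add_mul, add_mul, smul_add]
    abel
  | mem_mul m hm i x _ ih =>
    obtain ⟨v, rfl⟩ := hm
    rw [mul_assoc, contractLeft_ι_mul, contractLeft_ι_mul, ih, pow_succ']
    simp only [mul_add, sub_mul, smul_mul_assoc, mul_smul_comm, mul_assoc, neg_one_mul,
      neg_smul]
    abel

end ExteriorAlgebra

variable {N : Type} [AddCommGroup N]

theorem ctr_add (n n' : N) : ctr (n + n') = ctr n + ctr n' := by
  simp only [ctr, map_add]

theorem ctr_mul_of_mem_exteriorPower (n : N) {k : ℕ}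
    {α : ExteriorAlgebra ℤ (Module.Dual ℤ N)} (hα : α ∈ ⋀[ℤ]^k (Module.Dual ℤ N))
    (β : ExteriorAlgebra ℤ (Module.Dual ℤ N)) :
    ctr n (α * β) = ctr n α * β + ((-1 : ℤ) ^ k) • (α * ctr n β) :=
  ExteriorAlgebra.contractLeft_mul_of_mem_exteriorPower _ hα β

theorem lOne_single (n : N) (α : ExteriorAlgebra ℤ (Module.Dual ℤ N)) :
    lOne (AddMonoidAlgebra.single n α) = AddMonoidAlgebra.single n (ctr n α) := by
  simp [lOne, AddMonoidAlgebra.coeff_single]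

theorem lOne_single_mul_single {k : ℕ} (na nb : N) {αa : ExteriorAlgebra ℤ (Module.Dual ℤ N)}
    (hαa : αa ∈ ⋀[ℤ]^k (Module.Dual ℤ N)) (αb : ExteriorAlgebra ℤ (Module.Dual ℤ N)) :
    lOne (AddMonoidAlgebra.single na αa * AddMonoidAlgebra.single nb αb) =
      lOne (AddMonoidAlgebra.single na αa) * AddMonoidAlgebra.single nb αb +
        ((-1 : ℤ) ^ k) • (AddMonoidAlgebra.single na αa * lOne (AddMonoidAlgebra.single nb αb)) +
        ((-1 : ℤ) ^ (k + 1)) • snBracket na nb k αa αb := by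
  have sign_sq : ((-1 : ℤ) ^ (k + 1)) * (-1) ^ (k + 1) = 1 := by
    rw [← mul_pow, neg_one_mul, neg_neg, one_pow]
  rw [lOne_single, lOne_single, AddMonoidAlgebra.single_mul_single,
    AddMonoidAlgebra.single_mul_single, AddMonoidAlgebra.single_mul_single, lOne_single,
    ctr_add, LinearMap.add_apply, ctr_mul_of_mem_exteriorPower _ hαa,
    ctr_mul_of_mem_exteriorPower _ hαa, snBracket, smul_smul, sign_sq, one_smul,
    AddMonoidAlgebra.smul_single, ← AddMonoidAlgebra.single_add, ← AddMonoidAlgebra.single_add]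
  congr 1
  abel

theorem bv_bracket_is_schouten_general (N : Type) [AddCommGroup N]
    (na nb : N) (da : ℕ) (αa αb : ExteriorAlgebra ℤ (Module.Dual ℤ N))
    (hαa : αa ∈ ⋀[ℤ]^da (Module.Dual ℤ N))
    (a b : AddMonoidAlgebra (ExteriorAlgebra ℤ (Module.Dual ℤ N)) N)
    (ha : a = AddMonoidAlgebra.single na αa) (hb : b = AddMonoidAlgebra.single nb αb) :
    lOne (a * b) =
      lOne a * b + ((-1 : ℤ) ^ da) • (a * lOne b) +
        ((-1 : ℤ) ^ (da + 1)) • snBracket na nb da αa αb ∧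
    ((-1 : ℤ) ^ da) • lOne (a * b) - ((-1 : ℤ) ^ da) • (lOne a * b) - a * lOne b =
      -snBracket na nb da αa αb := by
  subst ha hb
  have derivation_failure := lOne_single_mul_single na nb hαa αb
  refine ⟨derivation_failure, ?_⟩
  have sign_sq : ((-1 : ℤ) ^ da) * (-1) ^ da = 1 := by
    rw [← mul_pow, neg_one_mul, neg_neg, one_pow]
  rw [derivation_failure, pow_succ, mul_neg_one, neg_smul, smul_add, smul_add, smul_neg,
    smul_smul, smul_smul, sign_sq, one_smul, one_smul]
  abel

/-- **Proposition `BVprop` (second half, equation (DerivationFail)).**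
The failure of `l_1` to be a derivation is measured by the Schouten–Nijenhuis bracket:
for all homogeneous `a, b ∈ A`,
`l_1(ab) = l_1(a)b + (−1)^{deg a} a l_1(b) + (−1)^{deg a − 1}[a, b]`;
equivalently, the bracket canonically associated to the BV-operator `l_1`, namely
`(−1)^{deg a} l_1(ab) − (−1)^{deg a} l_1(a)b − a l_1(b)`, equals `−[a, b]`. -/
theorem bv_bracket_is_schouten (N : Type) [AddCommGroup N] [Module.Free ℤ N]
    [Module.Finite ℤ N]
    (na nb : N) (da db : ℕ) (αa αb : ExteriorAlgebra ℤ (Module.Dual ℤ N))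
    (hαa : αa ∈ ⋀[ℤ]^da (Module.Dual ℤ N)) (hαb : αb ∈ ⋀[ℤ]^db (Module.Dual ℤ N))
    (a b : AddMonoidAlgebra (ExteriorAlgebra ℤ (Module.Dual ℤ N)) N)
    (ha : a = AddMonoidAlgebra.single na αa) (hb : b = AddMonoidAlgebra.single nb αb) :
    lOne (a * b) =
      lOne a * b + ((-1 : ℤ) ^ da) • (a * lOne b) +
        ((-1 : ℤ) ^ (da + 1)) • snBracket na nb da αa αb ∧
    ((-1 : ℤ) ^ da) • lOne (a * b) - ((-1 : ℤ) ^ da) • (lOne a * b) - a * lOne b =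
      -snBracket na nb da αa αb :=
  bv_bracket_is_schouten_general N na nb da αa αb hαa a b ha hb
end
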